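/- Under an observation-based adversary σ, the map from paths of the product MDP M^F = P||F to paths of the POMDP P obtained by projecting each product state szq to the POMDP state s (together with observation z) is a bijection between the sets of positive-probability finite paths of length n, and it preserves path probabilities; consequently the induced probability measures on length-n path events coincide. -/
import Mathlib


/-- The action chosen by an observation-based adversary `σ` at step `i` from the
observation prefix `z(0)…z(i)`. -/
def obsAct {Z A : Type*} (σ : List Z → A) {n : ℕ} (z : Fin (n + 1) → Z)
    (i : Fin n) : A :=
  σ (List.ofFn fun j : Fin (i.val + 1) => z (Fin.castLE (by omega) j))

/-- Cylinder-set probability of a finite POMDP path with observations under an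
observation-based adversary. -/
def pomdpProb {S Z A : Type*} (T : S → A → S → ℝ) (O : S → Z → ℝ)
    (σ : List Z → A) {n : ℕ} (ρ : Fin (n + 1) → S × Z) : ℝ :=
  O (ρ 0).1 (ρ 0).2 *
    ∏ i : Fin n,
      T (ρ i.castSucc).1 (obsAct σ (fun j => (ρ j).2) i) (ρ i.succ).1 *
        O (ρ i.succ).1 (ρ i.succ).2

/-- Transition function of the product MDP `P‖F` (Definition 6):
`T^F(szq, a, s'z'q') = O(s',z')·T(s,a,s')` if `δ(q,⟨z,a⟩) = q'`, else `0`. -/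
def prodT {S Z Q A : Type*} [DecidableEq Q] (T : S → A → S → ℝ) (O : S → Z → ℝ)
    (δ : Q → Z × A → Q) (x : S × Z × Q) (a : A) (y : S × Z × Q) : ℝ :=
  if δ x.2.2 (x.2.1, a) = y.2.2 then O y.1 y.2.1 * T x.1 a y.1 else 0

/-- Probability of a finite path of the product MDP under an observation-based
adversary. -/
def prodProb {S Z Q A : Type*} [DecidableEq Q] (T : S → A → S → ℝ) (O : S → Z → ℝ)
    (δ : Q → Z × A → Q) (σ : List Z → A) {n : ℕ} (π : Fin (n + 1) → S × Z × Q) : ℝ :=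
  O (π 0).1 (π 0).2.1 *
    ∏ i : Fin n,
      prodT T O δ (π i.castSucc) (obsAct σ (fun j => (π j).2.1) i) (π i.succ)

section Aux

variable {S Z Q A : Type*} [DecidableEq Q] (T : S → A → S → ℝ) (O : S → Z → ℝ)
  (δ : Q → Z × A → Q) (σ : List Z → A)

/-- From a positive-probability product path, each step satisfies the DFA condition. -/
lemma delta_cond {n : ℕ} {π : Fin (n + 1) → S × Z × Q}
    (h : 0 < prodProb T O δ σ π) (i : Fin n) :
    δ (π i.castSucc).2.2 ((π i.castSucc).2.1, obsAct σ (fun j => (π j).2.1) i)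
      = (π i.succ).2.2 := by
  unfold prodProb at h
  have h2 := (mul_ne_zero_iff.mp h.ne').2
  have h3 := Finset.prod_ne_zero_iff.mp h2 i (Finset.mem_univ i)
  by_contra hne
  exact h3 (by simp [prodT, hne])

/-- If every step satisfies the DFA condition, the product probability equals the
POMDP probability of the projected path. -/
lemma prod_eq_pomdp_of_cond {n : ℕ} {π : Fin (n + 1) → S × Z × Q}
    (hc : ∀ i : Fin n,
      δ (π i.castSucc).2.2 ((π i.castSucc).2.1, obsAct σ (fun j => (π j).2.1) i)
        = (π i.succ).2.2) :
    prodProb T O δ σ π = pomdpProb T O σ (fun i => ((π i).1, (π i).2.1)) := by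
  unfold prodProb pomdpProb
  congr 1
  refine Finset.prod_congr rfl fun i _ => ?_
  simp only [prodT, if_pos (hc i)]
  ring

/-- The DFA state sequence along a POMDP path, starting from `qbar`. -/
def runQ (δ : Q → Z × A → Q) (σ : List Z → A) (qbar : Q) {n : ℕ}
    (ρ : Fin (n + 1) → S × Z) : ℕ → Q
  | 0 => qbar
  | (k + 1) =>
    if h : k < n then
      δ (runQ δ σ qbar ρ k)
        ((ρ ⟨k, by omega⟩).2, obsAct σ (fun j => (ρ j).2) ⟨k, h⟩)
    else runQ δ σ qbar ρ k

end Aux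

/-- Under an observation-based adversary `σ`, projecting each product
state `szq` to `(s,z)` is a bijection from the positive-probability length-`n` paths
of the product MDP `P‖F` that start in DFA state `q̄` onto the positive-probability
length-`n` paths of the POMDP, and it preserves path probabilities; hence the induced
probability measures on length-`n` path events coincide. -/
theorem product_paths_bijective_prob_preserving
    {S Z Q A : Type*} [Fintype S] [Fintype Z] [Fintype Q] [DecidableEq Q]
    (T : S → A → S → ℝ) (O : S → Z → ℝ) (δ : Q → Z × A → Q)
    (σ : List Z → A) (qbar : Q) (n : ℕ) :
    Set.BijOn (fun (π : Fin (n + 1) → S × Z × Q) (i : Fin (n + 1)) =>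
        ((π i).1, (π i).2.1))
      {π | (π 0).2.2 = qbar ∧ 0 < prodProb T O δ σ π}
      {ρ : Fin (n + 1) → S × Z | 0 < pomdpProb T O σ ρ} ∧
    ∀ π : Fin (n + 1) → S × Z × Q, (π 0).2.2 = qbar → 0 < prodProb T O δ σ π →
      prodProb T O δ σ π = pomdpProb T O σ (fun i => ((π i).1, (π i).2.1)) := by
  have pres : ∀ π : Fin (n + 1) → S × Z × Q, (π 0).2.2 = qbar →
      0 < prodProb T O δ σ π →
      prodProb T O δ σ π = pomdpProb T O σ (fun i => ((π i).1, (π i).2.1)) := by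
    intro π _ hpos
    exact prod_eq_pomdp_of_cond T O δ σ (delta_cond T O δ σ hpos)
  refine ⟨⟨?_, ?_, ?_⟩, pres⟩
  · -- MapsTo
    intro π hπ
    have := pres π hπ.1 hπ.2
    simpa [Set.mem_setOf_eq, ← this] using hπ.2
  · -- InjOn
    intro π₁ h₁ π₂ h₂ heq
    have heq' : ∀ i : Fin (n + 1), ((π₁ i).1, (π₁ i).2.1) = ((π₂ i).1, (π₂ i).2.1) :=
      fun i => congrFun heq i
    have hfst : ∀ i, (π₁ i).1 = (π₂ i).1 := fun i => (Prod.ext_iff.mp (heq' i)).1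
    have hz : ∀ i, (π₁ i).2.1 = (π₂ i).2.1 := fun i => (Prod.ext_iff.mp (heq' i)).2
    have hq : ∀ i, (π₁ i).2.2 = (π₂ i).2.2 := by
      intro i
      induction i using Fin.induction with
      | zero => rw [h₁.1, h₂.1]
      | succ i ih =>
        rw [← delta_cond T O δ σ h₁.2 i, ← delta_cond T O δ σ h₂.2 i, ih, hz]
        congr 1
        unfold obsAct
        exact Prod.ext rfl (congrArg σ (congrArg List.ofFn (funext fun j => hz _)))
    funext i
    exact Prod.ext (hfst i) (Prod.ext (hz i) (hq i))
  · -- SurjOn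
    intro ρ hρ
    set π : Fin (n + 1) → S × Z × Q :=
      fun i => ((ρ i).1, (ρ i).2, runQ δ σ qbar ρ i.val) with hπdef
    have hproj : (fun i => ((π i).1, (π i).2.1)) = ρ := by
      funext i; simp [hπdef]
    have hc : ∀ i : Fin n,
        δ (π i.castSucc).2.2 ((π i.castSucc).2.1, obsAct σ (fun j => (π j).2.1) i)
          = (π i.succ).2.2 := by
      intro i
      show _ = runQ δ σ qbar ρ (i.val + 1)
      rw [runQ, dif_pos i.isLt]
      have h1 : (⟨i.val, by omega⟩ : Fin (n + 1)) = i.castSucc := rfl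
      have h2 : (⟨i.val, i.isLt⟩ : Fin n) = i := rfl
      rw [h1, h2]
      rfl
    have hprob : prodProb T O δ σ π = pomdpProb T O σ ρ := by
      rw [prod_eq_pomdp_of_cond T O δ σ hc, hproj]
    refine ⟨π, ⟨rfl, ?_⟩, hproj⟩
    rw [hprob]; exact hρ
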